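/- arXiv:1710.05737 — 2 statements merged into one kernel-verified Lean document; each statement's English description precedes it below -/
import Mathlib

section
/- Let p, q ≥ 2 be relatively prime integers. Then F_{p,q} ∘ F_{q,p} is the identity map on A_{pq}^ℤ; in particular F_{p,q} : A_{pq}^ℤ → A_{pq}^ℤ is a bijection with inverse F_{q,p}. -/
/-- The local rule multiplying by `p` in base `pq`: writing `x = x₁q + x₀` with
`x₀ ∈ {0,…,q-1}`, `x₁ ∈ {0,…,p-1}`, we have `g p q x y = x₀p + y₁`.
Note `g q p` is then the rule with the roles of `p` and `q` exchanged. -/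
def g (p q x y : ℕ) : ℕ := x % q * p + y / q

/-- The cellular automaton `G_{p,q}` on configurations. -/
def Gca (p q : ℕ) (c : ℤ → ℕ) : ℤ → ℕ := fun i => g p q (c i) (c (i + 1))

/-- The cellular automaton `F_{p,q} = σ⁻¹ ∘ G_{p,q} ∘ G_{p,q}`, where `σ` is the left
shift `σ(c)(i) = c(i+1)` (so `σ⁻¹(e)(i) = e(i-1)`). -/
def Fca (p q : ℕ) (c : ℤ → ℕ) : ℤ → ℕ := fun i => Gca p q (Gca p q c) (i - 1)

/-
Write `σ⁻¹ c = fun i => c (i - 1)`. The rule `g q p` splits a digit `a < pq` as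
`a = (a / p) * p + a % p` and sends `a / p` to the low digit of the cell on its left and
`a % p` to the high digit of its own cell; after a shift by `σ⁻¹` the rule `g p q` reads
both back into one cell. Hence `G_{p,q} ∘ σ⁻¹ ∘ G_{q,p}` is the identity on digits `< pq`,
and since `G_{p,q}` commutes with the shift,
`F_{p,q} ∘ F_{q,p} = σ⁻¹ ∘ G_{p,q} ∘ (G_{p,q} ∘ σ⁻¹ ∘ G_{q,p}) ∘ G_{q,p} = G_{p,q} ∘ σ⁻¹ ∘ G_{q,p}`.
-/

lemma g_lt_mul {p q x y : ℕ} (hy : y < q * p) : g p q x y < p * q := by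
  have hx : x % q < q := Nat.mod_lt _ (Nat.pos_of_mul_pos_right (Nat.zero_lt_of_lt hy))
  have hy' : y / q < p := Nat.div_lt_of_lt_mul hy
  calc x % q * p + y / q < (x % q + 1) * p := by rw [add_mul, one_mul]; omega
    _ ≤ q * p := Nat.mul_le_mul_right p hx
    _ = p * q := mul_comm q p

lemma g_g_cancel {p q a y : ℕ} (x : ℕ) (ha : a < p * q) (hy : y < p * q) :
    g p q (g q p x a) (g q p a y) = a := by
  have hq : 0 < q := Nat.pos_of_mul_pos_left (Nat.zero_lt_of_lt ha)
  have ha' : a / p < q := Nat.div_lt_of_lt_mul ha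
  have hy' : y / p < q := Nat.div_lt_of_lt_mul hy
  unfold g
  rw [Nat.mul_add_mod_of_lt ha', add_comm (a % p * q), Nat.add_mul_div_right _ _ hq,
    Nat.div_eq_of_lt hy', zero_add, Nat.div_add_mod']

lemma Gca_lt_mul {p q : ℕ} {c : ℤ → ℕ} (hc : ∀ i, c i < p * q) (i : ℤ) :
    Gca p q c i < p * q :=
  g_lt_mul (mul_comm p q ▸ hc (i + 1))

lemma Gca_shift (p q : ℕ) (c : ℤ → ℕ) :
    Gca p q (fun i => c (i - 1)) = fun i => Gca p q c (i - 1) := by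
  funext i
  simp only [Gca, sub_add_cancel, add_sub_cancel_right]

lemma Gca_shift_Gca {p q : ℕ} {e : ℤ → ℕ} (he : ∀ i, e i < p * q) :
    Gca p q (fun i => Gca q p e (i - 1)) = e := by
  funext i
  simp only [Gca, sub_add_cancel, add_sub_cancel_right]
  exact g_g_cancel _ (he i) (he (i + 1))

lemma mapsTo_Fca (p q : ℕ) :
    Set.MapsTo (Fca p q) {c : ℤ → ℕ | ∀ i, c i < p * q} {c : ℤ → ℕ | ∀ i, c i < p * q} :=
  fun _ hc i => Gca_lt_mul (Gca_lt_mul hc) (i - 1)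

lemma Fca_Fca {p q : ℕ} {c : ℤ → ℕ} (hc : ∀ i, c i < p * q) : Fca p q (Fca q p c) = c := by
  have hGc : ∀ i, Gca q p c i < p * q := fun i =>
    mul_comm q p ▸ Gca_lt_mul (fun j => mul_comm p q ▸ hc j) i
  have hinner : Gca p q (Fca q p c) = Gca q p c := Gca_shift_Gca hGc
  calc Fca p q (Fca q p c) = fun i => Gca p q (Gca q p c) (i - 1) := by
        funext i; simp only [Fca, hinner]
    _ = Gca p q (fun i => Gca q p c (i - 1)) := (Gca_shift p q _).symm
    _ = c := Gca_shift_Gca hc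

theorem stmt4_general (p q : ℕ) :
    (∀ c ∈ {c : ℤ → ℕ | ∀ i, c i < p * q}, Fca p q (Fca q p c) = c) ∧
    Set.InvOn (Fca q p) (Fca p q)
      {c : ℤ → ℕ | ∀ i, c i < p * q} {c : ℤ → ℕ | ∀ i, c i < p * q} ∧
    Set.BijOn (Fca p q)
      {c : ℤ → ℕ | ∀ i, c i < p * q} {c : ℤ → ℕ | ∀ i, c i < p * q} := by
  have hleft : ∀ c ∈ {c : ℤ → ℕ | ∀ i, c i < p * q}, Fca p q (Fca q p c) = c :=
    fun _ hc => Fca_Fca hc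
  have hinv : Set.InvOn (Fca q p) (Fca p q)
      {c : ℤ → ℕ | ∀ i, c i < p * q} {c : ℤ → ℕ | ∀ i, c i < p * q} :=
    ⟨fun c hc => Fca_Fca (p := q) (q := p) fun i => mul_comm p q ▸ hc i, hleft⟩
  have hmaps : Set.MapsTo (Fca q p)
      {c : ℤ → ℕ | ∀ i, c i < p * q} {c : ℤ → ℕ | ∀ i, c i < p * q} := by
    simpa only [mul_comm q p] using mapsTo_Fca q p
  exact ⟨hleft, hinv, hinv.bijOn (mapsTo_Fca p q) hmaps⟩

theorem stmt4 (p q : ℕ) (hp : 2 ≤ p) (hq : 2 ≤ q) (hpq : Nat.Coprime p q) :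
    (∀ c ∈ {c : ℤ → ℕ | ∀ i, c i < p * q}, Fca p q (Fca q p c) = c) ∧
    Set.InvOn (Fca q p) (Fca p q)
      {c : ℤ → ℕ | ∀ i, c i < p * q} {c : ℤ → ℕ | ∀ i, c i < p * q} ∧
    Set.BijOn (Fca p q)
      {c : ℤ → ℕ | ∀ i, c i < p * q} {c : ℤ → ℕ | ∀ i, c i < p * q} :=
  stmt4_general p q
end

section
/- Let p, q ≥ 2 be relatively prime integers. Then F_{p,q} preserves the uniform Bernoulli measure μ on A_{pq}^ℤ, i.e. μ(F_{p,q}^{-1}(S)) = μ(S) for every Borel set S ⊆ A_{pq}^ℤ. -/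
/-!
Since `F = σ⁻¹ ∘ G ∘ G`, it suffices that `σ⁻¹` and `G` preserve `μ`, and by the π-λ theorem it
suffices to check this on cylinders. Almost every configuration has all its letters below `pq`.
For such a `c`, writing `c(k) = a_k q + b_k` with `b_k < q`, the equation `G(c)(k) = s p + t` with
`t < p` says exactly `b_k = s` and `a_{k+1} = t`. So up to a null set the `G`-preimage of a cylinder
of length `n` is the disjoint union of `pq` cylinders of length `n + 1`, one for each choice of the
free digits `a_i < p` at the left end and `b_{i+n} < q` at the right end, and its measure is
`pq · (pq)^{-(n+1)} = (pq)^{-n}`.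
-/

open MeasureTheory

/-- The cylinder `cyl(w,i) = {c : c(i)c(i+1)…c(i+|w|-1) = w}`. -/
def cyl (w : List ℕ) (i : ℤ) : Set (ℤ → ℕ) :=
  {c | ∀ j : Fin w.length, c (i + (j : ℕ)) = w.get j}

open scoped ENNReal

lemma mem_cyl_iff {w : List ℕ} {i : ℤ} {c : ℤ → ℕ} :
    c ∈ cyl w i ↔ ∀ (k : ℕ) (hk : k < w.length), c (i + k) = w[k] :=
  ⟨fun h k hk => h ⟨k, hk⟩, fun h k => h k k.2⟩

lemma measurableSet_cyl (w : List ℕ) (i : ℤ) : MeasurableSet (cyl w i) := by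
  have : cyl w i = ⋂ k : Fin w.length, (fun c : ℤ → ℕ => c (i + (k : ℕ))) ⁻¹' {w.get k} := by
    ext c; simp [cyl]
  rw [this]
  exact .iInter fun k => measurable_pi_apply _ (measurableSet_singleton _)

def window (n : ℕ) (c : ℤ → ℕ) : List ℕ := List.ofFn fun k : Fin (2 * n + 1) => c (-n + k)

lemma mem_cyl_window {n : ℕ} {c d : ℤ → ℕ} :
    d ∈ cyl (window n c) (-n) ↔ ∀ j : ℤ, -n ≤ j → j ≤ n → d j = c j := by
  simp only [mem_cyl_iff, window, List.length_ofFn, List.getElem_ofFn]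
  constructor
  · intro h j hj₁ hj₂
    have := h (j + n).toNat (by omega)
    rwa [show -(n : ℤ) + (j + n).toNat = j by omega] at this
  · exact fun h k hk => h _ (by omega) (by omega)

/-- Any two of these cylinders that meet are nested. -/
def centeredCyls : Set (Set (ℤ → ℕ)) := {S | ∃ n c, S = cyl (window n c) (-n)}

lemma isPiSystem_centeredCyls : IsPiSystem centeredCyls := by
  rintro _ ⟨n, c, rfl⟩ _ ⟨m, d, rfl⟩ ⟨x, hxc, hxd⟩
  refine ⟨max n m, x, ?_⟩
  ext y
  simp only [Set.mem_inter_iff, mem_cyl_window] at hxc hxd ⊢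
  push_cast
  constructor
  · rintro ⟨hyc, hyd⟩ j hj₁ hj₂
    by_cases hj : -(n : ℤ) ≤ j ∧ j ≤ n
    · rw [hyc j hj.1 hj.2, hxc j hj.1 hj.2]
    · rw [hyd j (by omega) (by omega), hxd j (by omega) (by omega)]
  · intro hyx
    exact ⟨fun j hj₁ hj₂ => (hyx j (by omega) (by omega)).trans (hxc j hj₁ hj₂),
      fun j hj₁ hj₂ => (hyx j (by omega) (by omega)).trans (hxd j hj₁ hj₂)⟩

lemma generateFrom_centeredCyls :
    MeasurableSpace.generateFrom centeredCyls = MeasurableSpace.pi := by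
  refine le_antisymm (MeasurableSpace.generateFrom_le ?_) (iSup_le fun j => ?_)
  · rintro _ ⟨n, c, rfl⟩
    exact measurableSet_cyl _ _
  refine Measurable.comap_le
    (@measurable_to_countable' _ _ _ _ (.generateFrom centeredCyls) _ fun x => ?_)
  have hpre : (fun c : ℤ → ℕ => c j) ⁻¹' {x} =
      ⋃ w ∈ window j.natAbs '' {c | c j = x}, cyl w (-j.natAbs) := by
    ext d
    simp only [Set.biUnion_image, Set.mem_iUnion, Set.mem_preimage, Set.mem_singleton_iff,
      Set.mem_ofPred_eq, exists_prop]
    constructor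
    · exact fun hd => ⟨d, hd, mem_cyl_window.2 fun _ _ _ => rfl⟩
    · rintro ⟨c, hc, hd⟩
      exact (mem_cyl_window.1 hd j (by omega) (by omega)).trans hc
  rw [hpre]
  refine MeasurableSet.biUnion (Set.to_countable _) ?_
  rintro _ ⟨c, -, rfl⟩
  exact MeasurableSpace.measurableSet_generateFrom ⟨_, c, rfl⟩

lemma measurePreserving_of_cyl {μ : Measure (ℤ → ℕ)} [IsFiniteMeasure μ] {T : (ℤ → ℕ) → ℤ → ℕ}
    (hT : Measurable T) (h : ∀ w i, w ≠ [] → μ (T ⁻¹' cyl w i) = μ (cyl w i)) :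
    MeasurePreserving T μ μ := by
  refine ⟨hT, ext_of_generate_finite _ generateFrom_centeredCyls.symm isPiSystem_centeredCyls
    ?_ ?_⟩
  · rintro _ ⟨n, c, rfl⟩
    rw [Measure.map_apply hT (measurableSet_cyl _ _)]
    exact h _ _ (by simp [window])
  · rw [Measure.map_apply hT .univ, Set.preimage_univ]

/-- `μ` is the uniform Bernoulli measure on `{0, …, N-1}^ℤ ⊆ ℕ^ℤ`. -/
def IsUniformBernoulli (N : ℕ) (μ : Measure (ℤ → ℕ)) : Prop :=
  ∀ (w : List ℕ) (i : ℤ), w ≠ [] → (∀ x ∈ w, x < N) → μ (cyl w i) = ((N : ℝ≥0∞))⁻¹ ^ w.length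

lemma natCast_mul_inv_pow_succ {N : ℕ} (hN : 0 < N) (n : ℕ) :
    (N : ℝ≥0∞) * (N : ℝ≥0∞)⁻¹ ^ (n + 1) = (N : ℝ≥0∞)⁻¹ ^ n := by
  rw [pow_succ, mul_left_comm, ENNReal.mul_inv_cancel (by exact_mod_cast hN.ne')
    (ENNReal.natCast_ne_top N), mul_one]

section UniformBernoulli

variable {N : ℕ} {μ : Measure (ℤ → ℕ)}

lemma IsUniformBernoulli.ae_lt [IsProbabilityMeasure μ] (hN : 0 < N)
    (hμ : IsUniformBernoulli N μ) : ∀ᵐ c ∂μ, ∀ j, c j < N := by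
  refine ae_all_iff.2 fun j => (ae_iff_measure_eq ?_).2 ?_
  · exact (measurableSet_lt (measurable_pi_apply j) measurable_const).nullMeasurableSet
  calc μ {c | c j < N} = μ ((fun c : ℤ → ℕ => c j) ⁻¹' ↑(Finset.range N)) := by
        congr 1; ext c; simp
    _ = ∑ y ∈ Finset.range N, μ (cyl [y] j) := by
        rw [← sum_measure_preimage_singleton _
          fun y _ => measurable_pi_apply j (measurableSet_singleton y)]
        refine Finset.sum_congr rfl fun y _ => congrArg μ ?_
        ext c
        simp [mem_cyl_iff]
    _ = N * (N : ℝ≥0∞)⁻¹ ^ 1 := by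
        rw [Finset.sum_congr rfl fun y hy => hμ [y] j (List.cons_ne_nil _ _) (by simpa using hy)]
        simp
    _ = μ Set.univ := by rw [natCast_mul_inv_pow_succ hN 0, pow_zero, measure_univ]

lemma measure_preimage_cyl_eq_zero {T : (ℤ → ℕ) → ℤ → ℕ} (hT : ∀ᵐ c ∂μ, ∀ j, T c j < N)
    {w : List ℕ} (hw : ¬ ∀ x ∈ w, x < N) (i : ℤ) : μ (T ⁻¹' cyl w i) = 0 := by
  push Not at hw
  obtain ⟨_, hx, hNx⟩ := hw
  obtain ⟨k, hk, rfl⟩ := List.getElem_of_mem hx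
  refine measure_eq_zero_iff_ae_notMem.2 ?_
  filter_upwards [hT] with c hc hcw
  have := hc (i + k)
  rw [mem_cyl_iff.1 hcw k hk] at this
  omega

lemma IsUniformBernoulli.measurePreserving [IsProbabilityMeasure μ] (hN : 0 < N)
    (hμ : IsUniformBernoulli N μ) {T : (ℤ → ℕ) → ℤ → ℕ} (hT : Measurable T)
    (hTN : ∀ᵐ c ∂μ, ∀ j, T c j < N)
    (h : ∀ w i, w ≠ [] → (∀ x ∈ w, x < N) → μ (T ⁻¹' cyl w i) = ((N : ℝ≥0∞))⁻¹ ^ w.length) :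
    MeasurePreserving T μ μ := by
  refine measurePreserving_of_cyl hT fun w i hw => ?_
  by_cases hwN : ∀ x ∈ w, x < N
  · rw [h w i hw hwN, hμ w i hw hwN]
  · rw [measure_preimage_cyl_eq_zero hTN hwN]
    exact (measure_preimage_cyl_eq_zero (T := id) (hμ.ae_lt hN) hwN i).symm

end UniformBernoulli

def shiftInv (c : ℤ → ℕ) : ℤ → ℕ := fun i => c (i - 1)

lemma shiftInv_preimage_cyl (w : List ℕ) (i : ℤ) : shiftInv ⁻¹' cyl w i = cyl w (i - 1) := by
  ext c
  simp only [Set.mem_preimage, mem_cyl_iff, shiftInv, sub_add_eq_add_sub]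

lemma IsUniformBernoulli.measurePreserving_shiftInv {N : ℕ} {μ : Measure (ℤ → ℕ)}
    [IsProbabilityMeasure μ] (hN : 0 < N) (hμ : IsUniformBernoulli N μ) :
    MeasurePreserving shiftInv μ μ := by
  refine hμ.measurePreserving hN (measurable_pi_lambda _ fun i => measurable_pi_apply _) ?_
    fun w i hw hwN => by rw [shiftInv_preimage_cyl, hμ w _ hw hwN]
  filter_upwards [hμ.ae_lt hN] with c hc j using hc _

section Gca

variable {p q : ℕ}

lemma measurable_Gca : Measurable (Gca p q) := by
  refine measurable_pi_lambda _ fun i => ?_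
  change Measurable fun c : ℤ → ℕ => Function.uncurry (g p q) (c i, c (i + 1))
  exact (measurable_of_countable (Function.uncurry (g p q))).comp
    ((measurable_pi_apply i).prodMk (measurable_pi_apply (i + 1)))

lemma mul_add_lt_mul {A B : ℕ} (hA : A < p) (hB : B < q) : A * q + B < p * q :=
  calc A * q + B < (A + 1) * q := by rw [Nat.succ_mul]; omega
    _ ≤ p * q := Nat.mul_le_mul_right q hA

lemma g_lt (x : ℕ) {y : ℕ} (hq : 0 < q) (hy : y < p * q) : g p q x y < p * q :=
  (mul_add_lt_mul (Nat.mod_lt x hq) ((Nat.div_lt_iff_lt_mul hq).2 hy)).trans_eq (mul_comm q p)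

lemma g_eq_iff {x y z : ℕ} (hy : y < p * q) : g p q x y = z ↔ x % q = z / p ∧ y / q = z % p := by
  have hyq : y / q < p := by
    rcases Nat.eq_zero_or_pos q with rfl | hq
    · simp at hy
    · exact (Nat.div_lt_iff_lt_mul hq).2 hy
  rw [g, eq_comm (a := x % q), eq_comm (a := y / q),
    Nat.div_mod_unique ((Nat.zero_le _).trans_lt hyq)]
  constructor
  · rintro rfl
    exact ⟨by ring, hyq⟩
  · rintro ⟨rfl, -⟩
    ring

lemma mem_Gca_preimage_cyl_iff {u : List ℕ} {i : ℤ} {c : ℤ → ℕ}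
    (hc : ∀ k < u.length, c (i + k + 1) < p * q) :
    c ∈ Gca p q ⁻¹' cyl u i ↔
      ∀ k < u.length, c (i + k) % q = u.getD k 0 / p ∧ c (i + k + 1) / q = u.getD k 0 % p := by
  simp only [Set.mem_preimage, mem_cyl_iff, Gca]
  refine forall₂_congr fun k hk => ?_
  rw [g_eq_iff (hc k hk), List.getD_eq_getElem _ _ hk]

def preimageWord (p q : ℕ) (u : List ℕ) (a b : ℕ) : List ℕ :=
  List.ofFn fun k : Fin (u.length + 1) =>
    (if (k : ℕ) = 0 then a else u.getD (k - 1) 0 % p) * q +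
      if (k : ℕ) = u.length then b else u.getD k 0 / p

lemma mem_cyl_ofFn_mul_add_iff {n : ℕ} {A B : ℕ → ℕ} (hB : ∀ k ≤ n, B k < q) {i : ℤ}
    {c : ℤ → ℕ} :
    c ∈ cyl (List.ofFn fun k : Fin (n + 1) => A k * q + B k) i ↔
      ∀ k ≤ n, c (i + k) / q = A k ∧ c (i + k) % q = B k := by
  simp only [mem_cyl_iff, List.length_ofFn, List.getElem_ofFn, Nat.lt_succ_iff]
  refine forall₂_congr fun k hk => ?_
  rw [eq_comm, Nat.div_mod_unique (b := q) (by have := hB k hk; omega)]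
  constructor
  · intro h
    exact ⟨by rw [← h]; ring, hB k hk⟩
  · rintro ⟨h, -⟩
    rw [← h]; ring

lemma preimageWord_lo_lt (hp : 0 < p) {u : List ℕ} (hu : ∀ x ∈ u, x < p * q) {b : ℕ}
    (hb : b < q) (k : ℕ) : (if k = u.length then b else u.getD k 0 / p) < q := by
  split_ifs with hk
  · exact hb
  · rcases lt_or_ge k u.length with hk' | hk'
    · rw [List.getD_eq_getElem _ _ hk', Nat.div_lt_iff_lt_mul hp, mul_comm]
      exact hu _ (List.getElem_mem hk')
    · rw [List.getD_eq_default _ _ hk', Nat.zero_div]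
      omega

lemma mem_cyl_preimageWord_iff (hp : 0 < p) {u : List ℕ} (hu : ∀ x ∈ u, x < p * q) {a b : ℕ}
    (hb : b < q) {i : ℤ} {c : ℤ → ℕ} :
    c ∈ cyl (preimageWord p q u a b) i ↔ c i / q = a ∧ c (i + u.length) % q = b ∧
      ∀ k < u.length, c (i + k) % q = u.getD k 0 / p ∧ c (i + k + 1) / q = u.getD k 0 % p := by
  refine (mem_cyl_ofFn_mul_add_iff (A := fun k => if k = 0 then a else u.getD (k - 1) 0 % p)
    fun k _ => preimageWord_lo_lt hp hu hb k).trans ?_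
  constructor
  · intro h
    refine ⟨by simpa using (h 0 (Nat.zero_le _)).1, by simpa using (h _ le_rfl).2,
      fun k hk => ⟨?_, ?_⟩⟩
    · simpa [hk.ne] using (h k hk.le).2
    · simpa [add_assoc] using (h (k + 1) hk).1
  · rintro ⟨ha, hb, h⟩ k hk
    refine ⟨?_, ?_⟩
    · rcases k with _ | k
      · simpa using ha
      · simpa [add_assoc] using (h k (by omega)).2
    · rcases eq_or_lt_of_le hk with rfl | hk
      · simpa using hb
      · simpa [hk.ne] using (h k hk).1

lemma preimageWord_ne_nil (p q : ℕ) (u : List ℕ) (a b : ℕ) : preimageWord p q u a b ≠ [] := by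
  simp [preimageWord]

lemma lt_of_mem_preimageWord (hp : 0 < p) {u : List ℕ} (hu : ∀ x ∈ u, x < p * q) {a b : ℕ}
    (ha : a < p) (hb : b < q) : ∀ x ∈ preimageWord p q u a b, x < p * q := by
  simp only [preimageWord, List.mem_ofFn, forall_exists_index]
  rintro _ k rfl
  refine mul_add_lt_mul ?_ (preimageWord_lo_lt hp hu hb k)
  split_ifs
  exacts [ha, Nat.mod_lt _ hp]

lemma mem_Gca_preimage_cyl_iff_exists (hp : 0 < p) (hq : 0 < q) {u : List ℕ}
    (hu : ∀ x ∈ u, x < p * q) {i : ℤ} {c : ℤ → ℕ} (hc : ∀ j, c j < p * q) :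
    c ∈ Gca p q ⁻¹' cyl u i ↔ ∃ a < p, ∃ b < q, c ∈ cyl (preimageWord p q u a b) i := by
  rw [mem_Gca_preimage_cyl_iff fun _ _ => hc _]
  constructor
  · intro h
    refine ⟨c i / q, (Nat.div_lt_iff_lt_mul hq).2 (hc i), _,
      Nat.mod_lt _ hq, (mem_cyl_preimageWord_iff hp hu (Nat.mod_lt _ hq)).2 ⟨rfl, rfl, h⟩⟩
  · rintro ⟨a, -, b, hb, hmem⟩
    exact ((mem_cyl_preimageWord_iff hp hu hb).1 hmem).2.2

lemma IsUniformBernoulli.measure_Gca_preimage_cyl {μ : Measure (ℤ → ℕ)} [IsProbabilityMeasure μ]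
    (hp : 0 < p) (hq : 0 < q) (hμ : IsUniformBernoulli (p * q) μ) {u : List ℕ}
    (hu : ∀ x ∈ u, x < p * q) (i : ℤ) :
    μ (Gca p q ⁻¹' cyl u i) = ((p * q : ℕ) : ℝ≥0∞)⁻¹ ^ u.length := by
  have hae : Gca p q ⁻¹' cyl u i =ᵐ[μ]
      ⋃ ab ∈ Finset.range p ×ˢ Finset.range q, cyl (preimageWord p q u ab.1 ab.2) i := by
    refine Filter.eventuallyEq_set.2 ?_
    filter_upwards [hμ.ae_lt (Nat.mul_pos hp hq)] with c hc
    simp only [mem_Gca_preimage_cyl_iff_exists hp hq hu hc, Set.mem_iUnion, Finset.mem_product,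
      Finset.mem_range, exists_prop, Prod.exists, and_assoc]
    exact ⟨fun ⟨a, ha, b, hb, h⟩ => ⟨a, b, ha, hb, h⟩, fun ⟨a, b, ha, hb, h⟩ => ⟨a, ha, b, hb, h⟩⟩
  have hdisj : (↑(Finset.range p ×ˢ Finset.range q) : Set (ℕ × ℕ)).PairwiseDisjoint
      fun ab => cyl (preimageWord p q u ab.1 ab.2) i := by
    rintro ⟨a, b⟩ hab ⟨a', b'⟩ hab' hne
    simp only [Finset.coe_product, Set.mem_prod, Finset.coe_range, Set.mem_Iio] at hab hab'
    refine Set.disjoint_left.2 fun c hc hc' => hne ?_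
    obtain ⟨rfl, rfl, -⟩ := (mem_cyl_preimageWord_iff hp hu hab.2).1 hc
    obtain ⟨h₁, h₂, -⟩ := (mem_cyl_preimageWord_iff hp hu hab'.2).1 hc'
    rw [h₁, h₂]
  rw [measure_congr hae, measure_biUnion_finset hdisj fun _ _ => measurableSet_cyl _ _]
  rw [Finset.sum_congr rfl fun ab hab => by
    simp only [Finset.mem_product, Finset.mem_range] at hab
    exact hμ _ i (preimageWord_ne_nil _ _ _ _ _) (lt_of_mem_preimageWord hp hu hab.1 hab.2)]
  simp only [preimageWord, List.length_ofFn, Finset.sum_const, Finset.card_product,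
    Finset.card_range, nsmul_eq_mul]
  exact natCast_mul_inv_pow_succ (Nat.mul_pos hp hq) _

lemma IsUniformBernoulli.measurePreserving_Gca {μ : Measure (ℤ → ℕ)} [IsProbabilityMeasure μ]
    (hp : 0 < p) (hq : 0 < q) (hμ : IsUniformBernoulli (p * q) μ) :
    MeasurePreserving (Gca p q) μ μ := by
  refine hμ.measurePreserving (Nat.mul_pos hp hq) measurable_Gca ?_
    fun w i _ hw => hμ.measure_Gca_preimage_cyl hp hq hw i
  filter_upwards [hμ.ae_lt (Nat.mul_pos hp hq)] with c hc j using g_lt _ hq (hc _)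

end Gca

theorem stmt15_general (p q : ℕ) (hp : 2 ≤ p) (hq : 2 ≤ q)
    (μ : Measure (ℤ → ℕ)) [IsProbabilityMeasure μ]
    (hμ : ∀ (w : List ℕ) (i : ℤ), w ≠ [] → (∀ x ∈ w, x < p * q) →
      μ (cyl w i) = (((p * q : ℕ) : ENNReal))⁻¹ ^ w.length) :
    ∀ S : Set (ℤ → ℕ), MeasurableSet S → μ (Fca p q ⁻¹' S) = μ S := by
  have hμ' : IsUniformBernoulli (p * q) μ := hμ
  have hG := hμ'.measurePreserving_Gca (by omega) (by omega)
  have hF : MeasurePreserving (Fca p q) μ μ :=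
    (hμ'.measurePreserving_shiftInv (by positivity)).comp (hG.comp hG)
  exact fun S hS => hF.measure_preimage hS.nullMeasurableSet

theorem stmt15 (p q : ℕ) (hp : 2 ≤ p) (hq : 2 ≤ q) (hpq : Nat.Coprime p q)
    (μ : Measure (ℤ → ℕ)) [IsProbabilityMeasure μ]
    (hμ : ∀ (w : List ℕ) (i : ℤ), w ≠ [] → (∀ x ∈ w, x < p * q) →
      μ (cyl w i) = (((p * q : ℕ) : ENNReal))⁻¹ ^ w.length) :
    ∀ S : Set (ℤ → ℕ), MeasurableSet S → μ (Fca p q ⁻¹' S) = μ S :=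
  stmt15_general p q hp hq μ hμ
end
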